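/- arXiv:1908.03077 — 4 statements merged into one kernel-verified Lean document; each statement's English description precedes it below -/
import Mathlib

section
/- If f* := min{f_0(x) : x ∈ X, f_i(x) ≤ r_i for i = 1,...,m} and there exists a strictly feasible point x̃ ∈ X with max_i (f_i(x̃) − r_i) < 0 and f_0(x̃) > f*, then H(f*) = 0. -/
open Set

/-- Under strict feasibility, the level-set function satisfies `H(f*) = 0`. -/
theorem levelSetFunction_at_optimum_eq_zero
    {d m : ℕ} (X : Set (EuclideanSpace ℝ (Fin d)))
    (hXne : X.Nonempty) (hXcp : IsCompact X) (hXcv : Convex ℝ X)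
    (f0 : EuclideanSpace ℝ (Fin d) → ℝ) (f : Fin m → EuclideanSpace ℝ (Fin d) → ℝ)
    (rc : Fin m → ℝ)
    (hf0c : ContinuousOn f0 X) (hf0cv : ConvexOn ℝ X f0)
    (hfc : ∀ i, ContinuousOn (f i) X) (hfcv : ∀ i, ConvexOn ℝ X (f i))
    (P : ℝ → EuclideanSpace ℝ (Fin d) → ℝ)
    (hP : ∀ r x, P r x = max (f0 x - r) (⨆ i : Fin m, (f i x - rc i)))
    (H : ℝ → ℝ) (hH : ∀ r, H r = sInf ((fun x => P r x) '' X))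
    (fstar : ℝ)
    (hfstar : fstar = sInf (f0 '' {x ∈ X | ∀ i, f i x ≤ rc i}))
    (xt : EuclideanSpace ℝ (Fin d)) (hxtX : xt ∈ X)
    (hxtstrict : ∀ i, f i xt - rc i < 0) (hxtsub : f0 xt > fstar) :
    H fstar = 0 := by
  classical
  set S : Set (EuclideanSpace ℝ (Fin d)) := {x ∈ X | ∀ i, f i x ≤ rc i} with hS
  have hSsub : S ⊆ X := fun x hx => hx.1
  have hSne : S.Nonempty := ⟨xt, hxtX, fun i => le_of_lt (by linarith [hxtstrict i])⟩
  have hSclosed : IsClosed S := by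
    have hEq : S = X ∩ ⋂ i, (X ∩ f i ⁻¹' Set.Iic (rc i)) := by
      ext x
      simp only [hS, Set.mem_inter_iff, Set.mem_iInter, Set.mem_preimage, Set.mem_Iic,
        Set.mem_setOf_eq, Set.mem_sep_iff]
      exact ⟨fun h => ⟨h.1, fun i => ⟨h.1, h.2 i⟩⟩, fun h => ⟨h.1, fun i => (h.2 i).2⟩⟩
    rw [hEq]
    exact hXcp.isClosed.inter (isClosed_iInter fun i =>
      (hfc i).preimage_isClosed_of_isClosed hXcp.isClosed isClosed_Iic)
  have hScp : IsCompact S := hXcp.of_isClosed_subset hSclosed hSsub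
  obtain ⟨xs, hxsS, hxsmin⟩ := hScp.exists_isMinOn hSne (hf0c.mono hSsub)
  have hfstar_eq : fstar = f0 xs := by
    rw [hfstar]
    apply le_antisymm
    · exact csInf_le (hScp.image_of_continuousOn (hf0c.mono hSsub)).bddBelow ⟨xs, hxsS, rfl⟩
    · exact le_csInf ⟨f0 xs, xs, hxsS, rfl⟩ (by rintro b ⟨y, hy, rfl⟩; exact hxsmin hy)
  have hPnn : ∀ x ∈ X, 0 ≤ P fstar x := by
    intro x hx
    rw [hP]
    by_cases hcon : ∀ i, f i x ≤ rc i
    · have hle : fstar ≤ f0 x := by rw [hfstar_eq]; exact hxsmin ⟨hx, hcon⟩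
      exact le_max_of_le_left (by linarith)
    · push_neg at hcon
      obtain ⟨i, hi⟩ := hcon
      refine le_max_of_le_right ?_
      calc (0:ℝ) ≤ f i x - rc i := by linarith
        _ ≤ ⨆ i, (f i x - rc i) := le_ciSup (f := fun j => f j x - rc j) (Set.Finite.bddAbove (Set.finite_range _)) i
  have hPxs : P fstar xs = 0 := by
    rw [hP]
    have h1 : f0 xs - fstar = 0 := by rw [hfstar_eq]; ring
    have h2 : (⨆ i, (f i xs - rc i)) ≤ 0 :=
      Real.iSup_le (fun i => by linarith [hxsS.2 i]) le_rfl
    rw [h1]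
    exact max_eq_left h2
  rw [hH]
  apply le_antisymm
  · exact csInf_le ⟨0, by rintro y ⟨x, hx, rfl⟩; exact hPnn x hx⟩ ⟨xs, hSsub hxsS, hPxs⟩
  · exact le_csInf ⟨P fstar xs, xs, hSsub hxsS, rfl⟩ (by rintro b ⟨x, hx, rfl⟩; exact hPnn x hx)
end

section
/- Suppose r > f*, θ > 1, 0 < ε ≤ −((θ−1)/(θ+1)) H(r), and suppose U(r) ∈ ℝ and x̂ ∈ X satisfy P(r, x̂) − H(r) ≤ ε and |U(r) − H(r)| ≤ ε. Then θ·U(r) ≤ H(r) ≤ P(r, x̂) ≤ U(r)/θ. -/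
open Set

/-- Sandwich property of the oracle output: if `r > f*`, `θ > 1`,
`0 < ε ≤ −((θ−1)/(θ+1)) H(r)`, `P(r,x̂) − H(r) ≤ ε` and `|U − H(r)| ≤ ε`, then
`θ·U ≤ H(r) ≤ P(r,x̂) ≤ U/θ`. -/
theorem oracle_sandwich
    {d m : ℕ} (X : Set (EuclideanSpace ℝ (Fin d)))
    (hXne : X.Nonempty) (hXcp : IsCompact X) (hXcv : Convex ℝ X)
    (f0 : EuclideanSpace ℝ (Fin d) → ℝ) (f : Fin m → EuclideanSpace ℝ (Fin d) → ℝ)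
    (rc : Fin m → ℝ)
    (hf0c : ContinuousOn f0 X) (hf0cv : ConvexOn ℝ X f0)
    (hfc : ∀ i, ContinuousOn (f i) X) (hfcv : ∀ i, ConvexOn ℝ X (f i))
    (P : ℝ → EuclideanSpace ℝ (Fin d) → ℝ)
    (hP : ∀ r x, P r x = max (f0 x - r) (⨆ i : Fin m, (f i x - rc i)))
    (H : ℝ → ℝ) (hH : ∀ r, H r = sInf ((fun x => P r x) '' X))
    (fstar : ℝ) (hHanti : Antitone H)
    (hHnonpos : ∀ r, fstar < r → H r ≤ 0)
    (r ε θ U : ℝ) (hr : fstar < r) (hθ : 1 < θ)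
    (hε : 0 < ε) (hεH : ε ≤ -((θ - 1) / (θ + 1)) * H r)
    (xhat : EuclideanSpace ℝ (Fin d)) (hxhatX : xhat ∈ X)
    (hxhat : P r xhat - H r ≤ ε) (hU : |U - H r| ≤ ε) :
    θ * U ≤ H r ∧ H r ≤ P r xhat ∧ P r xhat ≤ U / θ := by
  -- lower bound on H r ≤ P r xhat via bddBelow
  obtain ⟨x0, hx0X, hx0⟩ := hXcp.exists_isMinOn hXne hf0c
  have hbdd : BddBelow ((fun x => P r x) '' X) := by
    refine ⟨f0 x0 - r, ?_⟩
    rintro y ⟨x, hx, rfl⟩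
    have h1 : f0 x0 ≤ f0 x := hx0 hx
    have h2 : f0 x - r ≤ P r x := by rw [hP]; exact le_max_left _ _
    linarith
  have hHP : H r ≤ P r xhat := by
    rw [hH]
    exact csInf_le hbdd ⟨xhat, hxhatX, rfl⟩
  have hθ1 : (0:ℝ) < θ + 1 := by linarith
  have key : (θ + 1) * ε ≤ -(θ - 1) * H r := by
    have := mul_le_mul_of_nonneg_left hεH (le_of_lt hθ1)
    calc (θ + 1) * ε ≤ (θ + 1) * (-((θ - 1) / (θ + 1)) * H r) := this
      _ = -(θ - 1) * H r := by field_simp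
  have hHneg : H r ≤ 0 := hHnonpos r hr
  have hU1 : U - H r ≤ ε := le_of_abs_le hU
  have hU2 : -(ε) ≤ U - H r := neg_le_of_abs_le hU
  refine ⟨?_, hHP, ?_⟩
  · nlinarith [mul_pos hε (sub_pos.mpr hθ)]
  · rw [le_div_iff₀ (by linarith : (0:ℝ) < θ)]
    nlinarith
end

section
/- Suppose for all k ≥ 0 the updates r^{k+1} = r^k + U^k/(2θ) hold where θ > 1, r⁰ > f*, and θ U^k ≤ H(r^k) ≤ U^k/θ with H convex non-increasing, H(f*) = 0, H(r) ≥ −(r − f*) for r > f*. Then r^{k+1} − f* ≥ (1/2)(r^k − f*) for all k with r^k > f*; in particular r^k > f* for all k. -/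
/-- Level-set updates decrease the gap `r^k − f*` by at most a factor 1/2:
`r^{k+1} − f* ≥ (1/2)(r^k − f*)` whenever `r^k > f*`; in particular `r^k > f*` for all `k`. -/
theorem levelSet_update_lower_bound
    (H : ℝ → ℝ) (fstar r0 θ : ℝ) (r U : ℕ → ℝ)
    (hHconv : ConvexOn ℝ Set.univ H) (hHanti : Antitone H)
    (hHzero : H fstar = 0)
    (hHlb : ∀ s : ℝ, fstar < s → H s ≥ -(s - fstar))
    (hθ : 1 < θ) (hr0 : fstar < r0) (hrinit : r 0 = r0)
    (hupd : ∀ k : ℕ, r (k + 1) = r k + U k / (2 * θ))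
    (hsand : ∀ k : ℕ, θ * U k ≤ H (r k) ∧ H (r k) ≤ U k / θ) :
    (∀ k : ℕ, fstar < r k → r (k + 1) - fstar ≥ (1 / 2) * (r k - fstar)) ∧
      (∀ k : ℕ, fstar < r k) := by
  have hθ0 : (0:ℝ) < θ := lt_trans one_pos hθ
  have key : ∀ k : ℕ, fstar < r k → r (k + 1) - fstar ≥ (1 / 2) * (r k - fstar) := by
    intro k hk
    have h1 : H (r k) ≤ U k / θ := (hsand k).2
    have h2 : H (r k) ≥ -(r k - fstar) := hHlb (r k) hk
    have hU : U k ≥ θ * H (r k) := by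
      have := (div_le_div_iff₀ hθ0 hθ0).mp (le_refl (U k / θ))
      nlinarith [(le_div_iff₀ hθ0).mp h1]
    have hUdiv : U k / (2 * θ) ≥ H (r k) / 2 := by
      rw [ge_iff_le, div_le_div_iff₀ (by norm_num) (by positivity)]
      nlinarith
    have : r (k + 1) - fstar = (r k - fstar) + U k / (2 * θ) := by
      rw [hupd k]; ring
    rw [this]
    nlinarith
  refine ⟨key, ?_⟩
  intro k
  induction k with
  | zero => rw [hrinit]; exact hr0
  | succ n ih =>
      have := key n ih
      nlinarith
end

section
/- Under the same setup, with β := −H(r⁰)/(r⁰ − f*) ∈ (0,1], the updates satisfy r^{k+1} − f* ≤ (1 − β/(2θ²))(r^k − f*) for all k, and consequently 0 ≤ r^k − f* ≤ (1 − β/(2θ²))^k (r⁰ − f*). -/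
/-! The gap `r^k − f*` is contracted at every step because the update moves by `U^k/(2θ)`,
where `θ U^k ≤ H(r^k)`, and `H(r^k)` lies below the chord of `H` from `(f*, 0)` to
`(r⁰, H(r⁰))`, i.e. `H(r^k) ≤ −β (r^k − f*)`. The chord applies since `U^k ≤ 0` keeps the
iterates in `(f*, r⁰]`. -/

open Set

theorem ConvexOn.le_mul_sub_of_apply_eq_zero {s : Set ℝ} {f : ℝ → ℝ} (hf : ConvexOn ℝ s f)
    {a b x : ℝ} (ha : a ∈ s) (hb : b ∈ s) (hx : x ∈ s) (hfa : f a = 0) (hax : a < x)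
    (hxb : x ≤ b) : f x ≤ f b / (b - a) * (x - a) := by
  have hslope := hf.secant_mono ha hx hb hax.ne' (hax.trans_le hxb).ne' hxb
  rw [hfa, sub_zero, sub_zero, div_le_iff₀ (sub_pos.2 hax)] at hslope
  exact hslope

section LevelSetUpdate

variable {H : ℝ → ℝ} {fstar θ β : ℝ} {r U : ℕ → ℝ} {k : ℕ}

theorem levelSet_update_succ_le (hHanti : Antitone H) (hHzero : H fstar = 0) (hθ : 0 < θ)
    (hupd : r (k + 1) = r k + U k / (2 * θ)) (hU : θ * U k ≤ H (r k)) (hpos : fstar < r k) :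
    r (k + 1) ≤ r k := by
  have hH : H (r k) ≤ 0 := hHzero ▸ hHanti hpos.le
  have hU_nonpos : U k ≤ 0 := by nlinarith
  rw [hupd]
  linarith [div_nonpos_of_nonpos_of_nonneg hU_nonpos (by positivity : (0 : ℝ) ≤ 2 * θ)]

theorem levelSet_gap_succ_le (hθ : 0 < θ)
    (hupd : r (k + 1) = r k + U k / (2 * θ)) (hU : θ * U k ≤ -β * (r k - fstar)) :
    r (k + 1) - fstar ≤ (1 - β / (2 * θ ^ 2)) * (r k - fstar) := by
  have hdiv : U k / (2 * θ) ≤ -β * (r k - fstar) / (2 * θ ^ 2) := by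
    rw [div_le_div_iff₀ (by positivity) (by positivity)]
    nlinarith
  rw [hupd]
  linarith [show (1 - β / (2 * θ ^ 2)) * (r k - fstar)
    = r k - fstar + -β * (r k - fstar) / (2 * θ ^ 2) by ring]

end LevelSetUpdate

theorem levelSet_update_geometric_decrease_general
    (H : ℝ → ℝ) (fstar r0 θ β : ℝ) (r U : ℕ → ℝ)
    (hHconv : ConvexOn ℝ Set.univ H) (hHanti : Antitone H)
    (hHzero : H fstar = 0)
    (hβdef : β = -H r0 / (r0 - fstar))
    (hθ : 1 < θ) (hrinit : r 0 = r0)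
    (hupd : ∀ k : ℕ, r (k + 1) = r k + U k / (2 * θ))
    (hsand : ∀ k : ℕ, θ * U k ≤ H (r k) ∧ H (r k) ≤ U k / θ)
    (hpos : ∀ k : ℕ, fstar < r k) :
    (∀ k : ℕ, r (k + 1) - fstar ≤ (1 - β / (2 * θ ^ 2)) * (r k - fstar)) ∧
      (∀ k : ℕ, 0 ≤ r k - fstar ∧ r k - fstar ≤ (1 - β / (2 * θ ^ 2)) ^ k * (r0 - fstar)) := by
  have hθ0 : 0 < θ := zero_lt_one.trans hθ
  have hr_anti : Antitone r := antitone_nat_of_succ_le fun k =>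
    levelSet_update_succ_le hHanti hHzero hθ0 (hupd k) (hsand k).1 (hpos k)
  have hchord (k : ℕ) : H (r k) ≤ -β * (r k - fstar) := by
    rw [hβdef, neg_div, neg_neg]
    exact hHconv.le_mul_sub_of_apply_eq_zero (mem_univ _) (mem_univ _) (mem_univ _) hHzero
      (hpos k) (hrinit ▸ hr_anti (Nat.zero_le k))
  have hstep (k : ℕ) := levelSet_gap_succ_le hθ0 (hupd k) ((hsand k).1.trans (hchord k))
  -- the factor is positive: it maps the positive gap at `0` above the positive gap at `1`
  have hc : 0 ≤ 1 - β / (2 * θ ^ 2) :=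
    (pos_of_mul_pos_left ((sub_pos.2 (hpos 1)).trans_le (hstep 0)) (sub_pos.2 (hpos 0)).le).le
  refine ⟨hstep, fun k => ⟨(sub_pos.2 (hpos k)).le, ?_⟩⟩
  simpa [hrinit] using le_geom (u := fun k => r k - fstar) hc k fun j _ => hstep j

/-- Geometric decrease of the gap: `r^{k+1} − f* ≤ (1 − β/(2θ²))(r^k − f*)` and hence
`0 ≤ r^k − f* ≤ (1 − β/(2θ²))^k (r⁰ − f*)`. -/
theorem levelSet_update_geometric_decrease
    (H : ℝ → ℝ) (fstar r0 θ β : ℝ) (r U : ℕ → ℝ)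
    (hHconv : ConvexOn ℝ Set.univ H) (hHanti : Antitone H)
    (hHzero : H fstar = 0)
    (hβdef : β = -H r0 / (r0 - fstar)) (hβpos : 0 < β) (hβle : β ≤ 1)
    (hratio : ∀ s ∈ Set.Ioc fstar r0, H s / (s - fstar) ≥ H r0 / (r0 - fstar))
    (hθ : 1 < θ) (hr0 : fstar < r0) (hrinit : r 0 = r0)
    (hupd : ∀ k : ℕ, r (k + 1) = r k + U k / (2 * θ))
    (hsand : ∀ k : ℕ, θ * U k ≤ H (r k) ∧ H (r k) ≤ U k / θ)
    (hpos : ∀ k : ℕ, fstar < r k) :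
    (∀ k : ℕ, r (k + 1) - fstar ≤ (1 - β / (2 * θ ^ 2)) * (r k - fstar)) ∧
      (∀ k : ℕ, 0 ≤ r k - fstar ∧ r k - fstar ≤ (1 - β / (2 * θ ^ 2)) ^ k * (r0 - fstar)) :=
  levelSet_update_geometric_decrease_general H fstar r0 θ β r U hHconv hHanti hHzero hβdef hθ hrinit
    hupd hsand hpos
end
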